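/- arXiv:1604.06003 — 3 statements merged into one kernel-verified Lean document; each statement's English description precedes it below -/
import Mathlib

section
/- Let C' ⊆ ℝ^d be a compact convex set and let C be a compact set contained in the interior of C'. Suppose f₀, f₁, f₂, … : C' → ℝ are convex functions that are uniformly bounded (there is B > 0 with |f_n(x)| ≤ B for all n ≥ 0 and x ∈ C') and uniformly Lipschitz (there is M > 0 with |f_n(x) − f_n(y)| ≤ M‖x − y‖ for all n ≥ 0 and x, y ∈ C'). If ∫_{C'} (f_n(x) − f₀(x))² dx → 0 as n → ∞ (Lebesgue integral), then sup_{x ∈ C} |f_n(x) − f₀(x)| → 0 as n → ∞. -/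
/-!
If a uniformly Lipschitz difference `g` satisfied `|g x| ≥ ε` at a point of `C`, then `|g| ≥ ε/2`
on a ball of fixed radius around that point, which stays inside `C'` because `C` is a compact
subset of the interior. By translation invariance of Lebesgue measure all these balls have the same
volume `v > 0`, so `∫_{C'} g² ≥ (ε/2)² v`, which is impossible once the `L²` distance is small.
-/

open MeasureTheory Filter Metric Topology
open scoped NNReal

theorem sq_sub_mul_mul_measureReal_ball_le_setIntegral_sq {α : Type*} [PseudoMetricSpace α]
    [MeasurableSpace α] [OpensMeasurableSpace α] {μ : Measure α} {g : α → ℝ} {s : Set α}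
    {K : ℝ≥0} {x : α} {r : ℝ} (hg : LipschitzOnWith K g s)
    (hint : IntegrableOn (fun y => g y ^ 2) s μ) (hx : x ∈ s) (hball : ball x r ⊆ s)
    (hr : K * r ≤ |g x|) :
    (|g x| - K * r) ^ 2 * μ.real (ball x r) ≤ ∫ y in s, g y ^ 2 ∂μ := by
  by_cases hfin : μ (ball x r) = ⊤
  · rw [measureReal_def, hfin, ENNReal.toReal_top, mul_zero]
    exact setIntegral_nonneg_of_ae_restrict (ae_of_all _ fun y => sq_nonneg _)
  have hlow : ∀ y ∈ ball x r, (|g x| - K * r) ^ 2 ≤ g y ^ 2 := by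
    intro y hy
    have hdist : |g x - g y| ≤ K * r := by
      rw [← Real.dist_eq]
      calc dist (g x) (g y) ≤ K * dist x y := hg.dist_le_mul x hx y (hball hy)
        _ ≤ K * r := by
          gcongr
          exact (mem_ball'.mp hy).le
    rw [← sq_abs (g y)]
    gcongr
    linarith [abs_sub_abs_le_abs_sub (g x) (g y)]
  calc (|g x| - K * r) ^ 2 * μ.real (ball x r)
      ≤ ∫ y in ball x r, g y ^ 2 ∂μ :=
        setIntegral_ge_of_const_le_real measurableSet_ball hfin hlow (hint.mono_set hball)
    _ ≤ ∫ y in s, g y ^ 2 ∂μ :=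
        setIntegral_mono_set hint (ae_of_all _ fun y => sq_nonneg _) hball.eventuallyLE

theorem tendstoUniformlyOn_of_setIntegral_sq_sub_tendsto_zero {E ι : Type*}
    [NormedAddCommGroup E] [ProperSpace E] [MeasurableSpace E] [BorelSpace E]
    (μ : Measure E) [μ.IsAddHaarMeasure] {l : Filter ι} {F : ι → E → ℝ} {f : E → ℝ}
    {U C : Set E} {K : ℝ≥0} (hC : IsCompact C) (hCU : C ⊆ interior U)
    (hlip : ∀ i, LipschitzOnWith K (fun x => F i x - f x) U)
    (hint : ∀ i, IntegrableOn (fun x => (F i x - f x) ^ 2) U μ)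
    (hL2 : Tendsto (fun i => ∫ x in U, (F i x - f x) ^ 2 ∂μ) l (𝓝 0)) :
    TendstoUniformlyOn F f l C := by
  obtain ⟨ρ, hρ, hρU⟩ := hC.exists_thickening_subset_open isOpen_interior hCU
  rw [Metric.tendstoUniformlyOn_iff]
  intro ε hε
  set r := min ρ (ε / (2 * (K + 1)))
  have hr : 0 < r := lt_min hρ (by positivity)
  have hKr : K * r ≤ ε / 2 :=
    calc (K : ℝ) * r ≤ (K + 1) * (ε / (2 * (K + 1))) := by
          gcongr
          · linarith
          · exact min_le_right _ _
      _ = ε / 2 := by field_simp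
  set v := μ.real (ball (0 : E) r)
  have hv : 0 < v := ENNReal.toReal_pos (measure_ball_pos μ 0 hr).ne' measure_ball_lt_top.ne
  filter_upwards [hL2.eventually (gt_mem_nhds (by positivity : 0 < (ε / 2) ^ 2 * v))]
    with i hi x hx
  rw [Real.dist_eq, abs_sub_comm]
  by_contra! hge
  have hball : ball x r ⊆ U := fun y hy =>
    interior_subset <| hρU <| ball_subset_thickening hx ρ <|
      ball_subset_ball (min_le_left _ _) hy
  have hbound := sq_sub_mul_mul_measureReal_ball_le_setIntegral_sq (hlip i) (hint i)
    (hball (mem_ball_self hr)) hball (by linarith)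
  have hcenter : μ.real (ball x r) = v := by
    simp only [v, measureReal_def, Measure.addHaar_ball_center]
  rw [hcenter] at hbound
  have hsq : (ε / 2) ^ 2 ≤ (|F i x - f x| - K * r) ^ 2 := by
    gcongr
    linarith
  linarith [mul_le_mul_of_nonneg_right hsq hv.le]

theorem tendsto_iSup_abs_sub_of_tendstoUniformlyOn {α ι : Type*} {l : Filter ι}
    {F : ι → α → ℝ} {f : α → ℝ} {s : Set α} (h : TendstoUniformlyOn F f l s) :
    Tendsto (fun i => ⨆ x ∈ s, |F i x - f x|) l (𝓝 0) := by
  rw [Metric.tendsto_nhds]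
  intro ε hε
  filter_upwards [Metric.tendstoUniformlyOn_iff.mp h (ε / 2) (half_pos hε)] with i hi
  have hsup : ⨆ x ∈ s, |F i x - f x| ≤ ε / 2 :=
    Real.iSup_le (fun x => Real.iSup_le (fun hx => by
      rw [abs_sub_comm, ← Real.dist_eq]; exact (hi x hx).le) (by positivity)) (by positivity)
  have hnonneg : 0 ≤ ⨆ x ∈ s, |F i x - f x| :=
    Real.iSup_nonneg fun x => Real.iSup_nonneg fun _ => abs_nonneg _
  rw [Real.dist_eq, sub_zero, abs_of_nonneg hnonneg]
  linarith

theorem sckls_L2_to_uniform_convergence_general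
    {d : ℕ} (C' C : Set (EuclideanSpace ℝ (Fin d)))
    (hC'comp : IsCompact C')
    (hCcomp : IsCompact C) (hCsub : C ⊆ interior C')
    (f : ℕ → EuclideanSpace ℝ (Fin d) → ℝ)
    (M : ℝ)
    (hlip : ∀ n, ∀ x ∈ C', ∀ y ∈ C', |f n x - f n y| ≤ M * ‖x - y‖)
    (hL2 : Tendsto (fun n => ∫ x in C', (f n x - f 0 x) ^ 2) atTop (nhds 0)) :
    Tendsto (fun n => ⨆ x ∈ C, |f n x - f 0 x|) atTop (nhds 0) := by
  have hK : ∀ n, LipschitzOnWith M.toNNReal (f n) C' := fun n =>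
    LipschitzOnWith.of_dist_le_mul fun x hx y hy => by
      rw [Real.dist_eq, dist_eq_norm]
      exact (hlip n x hx y hy).trans (by gcongr; exact Real.le_coe_toNNReal M)
  have hdiff : ∀ n, LipschitzOnWith (M.toNNReal + M.toNNReal) (fun x => f n x - f 0 x) C' :=
    fun n => (hK n).sub (hK 0)
  exact tendsto_iSup_abs_sub_of_tendstoUniformlyOn <|
    tendstoUniformlyOn_of_setIntegral_sq_sub_tendsto_zero volume hCcomp hCsub hdiff
      (fun n => ((hdiff n).continuousOn.pow 2).integrableOn_compact hC'comp) hL2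

/-- Lemma B.3: L² convergence of uniformly bounded, uniformly Lipschitz convex functions
implies uniform convergence on compact subsets of the interior. -/
theorem sckls_L2_to_uniform_convergence
    {d : ℕ} (C' C : Set (EuclideanSpace ℝ (Fin d)))
    (hC'comp : IsCompact C') (hC'conv : Convex ℝ C')
    (hCcomp : IsCompact C) (hCsub : C ⊆ interior C')
    (f : ℕ → EuclideanSpace ℝ (Fin d) → ℝ)
    (hconv : ∀ n, ConvexOn ℝ C' (f n))
    (B : ℝ) (hB : 0 < B) (hbound : ∀ n, ∀ x ∈ C', |f n x| ≤ B)
    (M : ℝ) (hM : 0 < M)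
    (hlip : ∀ n, ∀ x ∈ C', ∀ y ∈ C', |f n x - f n y| ≤ M * ‖x - y‖)
    (hL2 : Tendsto (fun n => ∫ x in C', (f n x - f 0 x) ^ 2) atTop (nhds 0)) :
    Tendsto (fun n => ⨆ x ∈ C, |f n x - f 0 x|) atTop (nhds 0) :=
  sckls_L2_to_uniform_convergence_general C' C hC'comp hCcomp hCsub f M hlip hL2
end

section
/- Let C' ⊆ ℝ^d, let f, f₀ : C' → ℝ be M-Lipschitz functions (M > 0), and suppose |f(x*) − f₀(x*)| ≥ ε for some x* ∈ C' and ε > 0. Let q : C' → ℝ satisfy q(x) ≥ q_min for all x ∈ C', where q_min > 0. If r ≤ ε/(4M) and the closed Euclidean ball B_r(x*) of radius r centered at x* is contained in C', then ∫_{C'} (f(x) − f₀(x))² q(x) dx ≥ (ε²/4) · q_min · vol(B_r(x*)), where vol denotes Lebesgue measure of the ball. -/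
open MeasureTheory

/-! Near `x⋆` the two `M`-Lipschitz functions can each move by at most `M r ≤ ε / 4`, so on the
ball `B_r(x⋆)` their gap stays at least `ε / 2`; the integrand is then at least `ε² / 4 · q_min`
on the ball, and integrating this constant over the ball gives the bound. -/

theorem abs_sub_sub_two_mul_norm_le_abs_sub {E : Type*} [SeminormedAddCommGroup E] {s : Set E}
    {f g : E → ℝ} {M : ℝ} (hf : ∀ x ∈ s, ∀ y ∈ s, |f x - f y| ≤ M * ‖x - y‖)
    (hg : ∀ x ∈ s, ∀ y ∈ s, |g x - g y| ≤ M * ‖x - y‖) {x y : E} (hx : x ∈ s) (hy : y ∈ s) :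
    |f y - g y| - 2 * M * ‖x - y‖ ≤ |f x - g x| := by
  have htri : |f y - g y| ≤ |f x - g x| + |f x - f y| + |g x - g y| :=
    calc |f y - g y| = |(f x - g x) + -(f x - f y) + (g x - g y)| := by ring_nf
      _ ≤ |f x - g x| + |-(f x - f y)| + |g x - g y| := abs_add_three _ _ _
      _ = |f x - g x| + |f x - f y| + |g x - g y| := by rw [abs_neg]
  linarith [hf x hx y hy, hg x hx y hy]

theorem ofReal_mul_measure_le_setLIntegral_of_forall_le {α : Type*} [MeasurableSpace α]
    {μ : Measure α} {s t : Set α} {c : ℝ} {g : α → ℝ} (hts : t ⊆ s) (ht : MeasurableSet t)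
    (hc : ∀ x ∈ t, c ≤ g x) :
    ENNReal.ofReal c * μ t ≤ ∫⁻ x in s, ENNReal.ofReal (g x) ∂μ :=
  calc ENNReal.ofReal c * μ t = ∫⁻ _ in t, ENNReal.ofReal c ∂μ := (setLIntegral_const t _).symm
    _ ≤ ∫⁻ x in t, ENNReal.ofReal (g x) ∂μ :=
      setLIntegral_mono_ae' ht (.of_forall fun x hx => ENNReal.ofReal_le_ofReal (hc x hx))
    _ ≤ ∫⁻ x in s, ENNReal.ofReal (g x) ∂μ := lintegral_mono_set hts

/-- A pointwise sup-norm discrepancy between M-Lipschitz functions forces a lower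
bound on the weighted L² distance (Lebesgue integral). -/
theorem lipschitz_discrepancy_weighted_L2_lower_bound
    {d : ℕ} (C' : Set (EuclideanSpace ℝ (Fin d)))
    (f f₀ q : EuclideanSpace ℝ (Fin d) → ℝ) (M : ℝ) (hM : 0 < M)
    (hf : ∀ x ∈ C', ∀ y ∈ C', |f x - f y| ≤ M * ‖x - y‖)
    (hf₀ : ∀ x ∈ C', ∀ y ∈ C', |f₀ x - f₀ y| ≤ M * ‖x - y‖)
    (qmin : ℝ) (hqmin : 0 < qmin) (hq : ∀ x ∈ C', qmin ≤ q x)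
    (xstar : EuclideanSpace ℝ (Fin d)) (hxstar : xstar ∈ C')
    (ε : ℝ) (hε : 0 < ε) (hbig : ε ≤ |f xstar - f₀ xstar|)
    (r : ℝ) (hr : r ≤ ε / (4 * M)) (hball : Metric.closedBall xstar r ⊆ C') :
    ENNReal.ofReal (ε ^ 2 / 4 * qmin) * volume (Metric.closedBall xstar r)
      ≤ ∫⁻ x in C', ENNReal.ofReal ((f x - f₀ x) ^ 2 * q x) := by
  refine ofReal_mul_measure_le_setLIntegral_of_forall_le hball measurableSet_closedBall
    fun x hx => ?_
  have hxC : x ∈ C' := hball hx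
  have hMr : 2 * M * ‖x - xstar‖ ≤ ε / 2 := by
    have : r * (4 * M) ≤ ε := (le_div_iff₀ (by positivity)).1 hr
    have : ‖x - xstar‖ ≤ r := by rwa [← dist_eq_norm]
    nlinarith
  have hgap : ε / 2 ≤ |f x - f₀ x| := by
    linarith [abs_sub_sub_two_mul_norm_le_abs_sub hf hf₀ hxC hxstar]
  have hsq : ε ^ 2 / 4 ≤ (f x - f₀ x) ^ 2 := by
    have := pow_le_pow_left₀ (by positivity) hgap 2
    rwa [sq_abs, div_pow, show (2 : ℝ) ^ 2 = 4 by norm_num] at this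
  calc ε ^ 2 / 4 * qmin ≤ (f x - f₀ x) ^ 2 * qmin := by gcongr
    _ ≤ (f x - f₀ x) ^ 2 * q x := by gcongr; exact hq x hxC
end

section
/- Let X₁, …, X_n ∈ ℝ^d be pairwise distinct, let y₁, …, y_n ∈ ℝ, and let K : ℝ^d → ℝ vanish outside the closed Euclidean ball of radius R > 0 centered at the origin. Set h₀ = min_{i ≠ j} ‖X_i − X_j‖ / R. Then for every h with 0 < h < h₀ and every choice of (a_i, b_i) ∈ ℝ × ℝ^d for i = 1,…,n, one has Σ_{i=1}^n Σ_{j=1}^n ( y_j − a_i − ⟨b_i, X_j − X_i⟩ )² K((X_j − X_i)/h) = K(0) · Σ_{i=1}^n ( y_i − a_i )². Consequently, if K(0) > 0, then for any constraint set S ⊆ (ℝ × ℝ^d)^n, a point (a, b) ∈ S minimizes the left-hand side over S if and only if its component a minimizes Σ_{i=1}^n (y_i − a_i)² over the projection { a' : ∃ b', (a', b') ∈ S }. -/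
open scoped RealInnerProductSpace

/-
Once `h * R` is below every pairwise distance `‖X j - X i‖`, the rescaled kernel
`K (h⁻¹ • (X j - X i))` vanishes for `j ≠ i`, so only the diagonal terms `j = i` survive;
there `X j - X i = 0`, the slope term `⟪b i, 0⟫` drops out and each inner sum is
`(y i - a i) ^ 2 * K 0`. The SCKLS objective is thus `K 0` times the CNLS objective, and it
does not depend on the slopes `b`, so minimizing it over `S` amounts to minimizing the CNLS
objective over the projection of `S`.
-/

/-- The SCKLS objective with evaluation points equal to the (distinct) data points. -/
noncomputable def scklsObjective {d n : ℕ} (X : Fin n → EuclideanSpace ℝ (Fin d))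
    (y : Fin n → ℝ) (K : EuclideanSpace ℝ (Fin d) → ℝ) (h : ℝ)
    (a : Fin n → ℝ) (b : Fin n → EuclideanSpace ℝ (Fin d)) : ℝ :=
  ∑ i, ∑ j, (y j - a i - ⟪b i, X j - X i⟫) ^ 2 * K (h⁻¹ • (X j - X i))

theorem mul_lt_norm_sub_of_lt_iInf {ι E : Type*} [Finite ι] [SeminormedAddCommGroup E]
    {X : ι → E} {R h : ℝ} (hR : 0 < R)
    (hh0 : h < ⨅ p : {p : ι × ι // p.1 ≠ p.2}, ‖X p.1.1 - X p.1.2‖ / R)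
    {i j : ι} (hij : i ≠ j) : h * R < ‖X i - X j‖ := by
  refine (lt_div_iff₀ hR).mp (hh0.trans_le ?_)
  exact ciInf_le (Set.finite_range _).bddBelow (⟨(i, j), hij⟩ : {p : ι × ι // p.1 ≠ p.2})

theorem apply_inv_smul_eq_zero_of_mul_lt_norm {E : Type*} [SeminormedAddCommGroup E]
    [NormedSpace ℝ E] {K : E → ℝ} {R h : ℝ} (hK : ∀ u, R < ‖u‖ → K u = 0)
    (hh : 0 < h) {v : E} (hv : h * R < ‖v‖) : K (h⁻¹ • v) = 0 := by
  apply hK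
  rw [norm_smul, Real.norm_of_nonneg (inv_nonneg.mpr hh.le), lt_inv_mul_iff₀ hh]
  linarith

theorem scklsObjective_eq_of_offDiag_eq_zero {d n : ℕ}
    {X : Fin n → EuclideanSpace ℝ (Fin d)} {y : Fin n → ℝ}
    {K : EuclideanSpace ℝ (Fin d) → ℝ} {h : ℝ}
    (hK : ∀ i j, i ≠ j → K (h⁻¹ • (X j - X i)) = 0)
    (a : Fin n → ℝ) (b : Fin n → EuclideanSpace ℝ (Fin d)) :
    scklsObjective X y K h a b = K 0 * ∑ i, (y i - a i) ^ 2 := by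
  rw [scklsObjective, Finset.mul_sum]
  refine Finset.sum_congr rfl fun i _ => ?_
  rw [Fintype.sum_eq_single i fun j hji => by rw [hK i j hji.symm, mul_zero]]
  simp [mul_comm]

theorem forall_mem_comp_fst_iff {ι α β : Type*} (S : Set (ι → α × β))
    (P : (ι → α) → Prop) :
    (∀ c ∈ S, P fun i => (c i).1) ↔
      ∀ a, (∃ b : ι → β, (fun i => (a i, b i)) ∈ S) → P a := by
  refine ⟨fun hS a ⟨b, hab⟩ => hS _ hab, fun hS c hc => hS _ ⟨fun i => (c i).2, ?_⟩⟩
  simpa only [Prod.mk.eta] using hc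

theorem sckls_equals_cnls_small_bandwidth_general
    {d n : ℕ} (X : Fin n → EuclideanSpace ℝ (Fin d))
    (y : Fin n → ℝ) (K : EuclideanSpace ℝ (Fin d) → ℝ) (R : ℝ) (hR : 0 < R)
    (hK : ∀ u, R < ‖u‖ → K u = 0)
    (h : ℝ) (hh : 0 < h)
    (hh0 : h < ⨅ p : {p : Fin n × Fin n // p.1 ≠ p.2}, ‖X p.1.1 - X p.1.2‖ / R) :
    (∀ (a : Fin n → ℝ) (b : Fin n → EuclideanSpace ℝ (Fin d)),
      scklsObjective X y K h a b = K 0 * ∑ i, (y i - a i) ^ 2) ∧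
    (0 < K 0 →
      ∀ (S : Set (Fin n → ℝ × EuclideanSpace ℝ (Fin d)))
        (c : Fin n → ℝ × EuclideanSpace ℝ (Fin d)), c ∈ S →
        ((∀ c' ∈ S,
            scklsObjective X y K h (fun i => (c i).1) (fun i => (c i).2)
              ≤ scklsObjective X y K h (fun i => (c' i).1) (fun i => (c' i).2)) ↔
          (∀ a' : Fin n → ℝ, (∃ b' : Fin n → EuclideanSpace ℝ (Fin d), (fun i => (a' i, b' i)) ∈ S) →
            ∑ i, (y i - (c i).1) ^ 2 ≤ ∑ i, (y i - a' i) ^ 2))) := by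
  have hoffDiag : ∀ i j, i ≠ j → K (h⁻¹ • (X j - X i)) = 0 := fun i j hij =>
    apply_inv_smul_eq_zero_of_mul_lt_norm hK hh (mul_lt_norm_sub_of_lt_iInf hR hh0 hij.symm)
  have hcollapse := scklsObjective_eq_of_offDiag_eq_zero (y := y) hoffDiag
  refine ⟨hcollapse, fun hK0 S c _ => ?_⟩
  simp only [hcollapse, mul_le_mul_iff_right₀ hK0]
  exact forall_mem_comp_fst_iff S fun a => ∑ i, (y i - (c i).1) ^ 2 ≤ ∑ i, (y i - a i) ^ 2

/-- Proposition A.1: for evaluation points equal to the sample points and bandwidth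
below the minimal pairwise distance over R, the SCKLS objective collapses to
K(0) times the CNLS least-squares objective, and (if K(0) > 0) constrained minimizers
of the SCKLS objective are exactly those whose intercept component minimizes the CNLS
objective over the projected constraint set. -/
theorem sckls_equals_cnls_small_bandwidth
    {d n : ℕ} (X : Fin n → EuclideanSpace ℝ (Fin d)) (hX : Function.Injective X)
    (y : Fin n → ℝ) (K : EuclideanSpace ℝ (Fin d) → ℝ) (R : ℝ) (hR : 0 < R)
    (hK : ∀ u, R < ‖u‖ → K u = 0)
    (h : ℝ) (hh : 0 < h)
    (hh0 : h < ⨅ p : {p : Fin n × Fin n // p.1 ≠ p.2}, ‖X p.1.1 - X p.1.2‖ / R) :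
    (∀ (a : Fin n → ℝ) (b : Fin n → EuclideanSpace ℝ (Fin d)),
      scklsObjective X y K h a b = K 0 * ∑ i, (y i - a i) ^ 2) ∧
    (0 < K 0 →
      ∀ (S : Set (Fin n → ℝ × EuclideanSpace ℝ (Fin d)))
        (c : Fin n → ℝ × EuclideanSpace ℝ (Fin d)), c ∈ S →
        ((∀ c' ∈ S,
            scklsObjective X y K h (fun i => (c i).1) (fun i => (c i).2)
              ≤ scklsObjective X y K h (fun i => (c' i).1) (fun i => (c' i).2)) ↔
          (∀ a' : Fin n → ℝ, (∃ b' : Fin n → EuclideanSpace ℝ (Fin d), (fun i => (a' i, b' i)) ∈ S) →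
            ∑ i, (y i - (c i).1) ^ 2 ≤ ∑ i, (y i - a' i) ^ 2))) :=
  sckls_equals_cnls_small_bandwidth_general X y K R hR hK h hh hh0
end
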